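/- Let m̲ ≥ 2 be an integer with N ≥ m̲ almost surely. Let a̲ > 0 and ε > 0 satisfy (a̲+ε) p < 1 and (a̲+ε) p m̲ < 1, and assume P(N = m̲ and max_{i,j}(A_k)_{ij} ≤ a̲ + ε for all 1 ≤ k ≤ m̲) > 0. Then, with γ(ε) := −log m̲ / log((a̲+ε)p) ∈ (0,1), there exists a constant C₂ > 0 such that φ(t) ≥ exp(−C₂ ‖t‖^{γ(ε)}) for all t ∈ [0,∞)^p with ‖t‖ sufficiently large, and for every fixed nonzero y ∈ [0,∞)^p there exists a constant C_{2,y} > 0 such that P(y·Z ≤ x) ≥ exp(−C_{2,y} x^{−γ(ε)/(1−γ(ε))}) for all x > 0 sufficiently small. -/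

import Mathlib

/-!
Let `ρ = (a + ε) p` and `q > 0` the probability of the event `{N = m, (A_k)ᵢⱼ ≤ a + ε for k ≤ m}`.
On that event every factor `φ (t A_k)` of the fixed-point equation is at least
`φ ((a + ε) ‖t‖ 𝟙)`, since `φ` is antitone; hence `g s = φ (s 𝟙)` satisfies
`q g(ρ s) ^ m ≤ g s`. For `h = -log g` this is `h s ≤ -log q + m h(ρ s)`, and iterating it
`⌈-logb ρ s⌉` times, until the argument falls below `1`, gives `h s = O(s ^ γ)` with
`γ = -logb ρ m`; for general `t` use `φ t ≥ φ (‖t‖ 𝟙)`. The small-ball bound is the usual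
Tauberian converse: `P(y⬝Z ≤ x) ≥ E exp(-θ y⬝Z) - exp(-θ x)` with `θ` of order `x ^ (-1 / (1 - γ))`.
-/

open MeasureTheory Real Set Matrix

theorem rpow_logb_comm {b x y : ℝ} (hx : 0 < x) (hy : 0 < y) :
    x ^ logb b y = y ^ logb b x := by
  rw [rpow_def_of_pos hx, rpow_def_of_pos hy, logb, logb]
  ring_nf

theorem neg_logb_lt_one {ρ m : ℝ} (hρ0 : 0 < ρ) (hρ1 : ρ < 1) (hm : 0 < m) (hρm : ρ * m < 1) :
    -logb ρ m < 1 := by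
  rwa [neg_lt, lt_logb_iff_rpow_lt_of_base_lt_one hρ0 hρ1 hm, rpow_neg_one, ← mul_one ρ⁻¹,
    lt_inv_mul_iff₀ hρ0]

theorem le_pow_mul_of_le_mul_comp {g : ℝ → ℝ} {m ρ : ℝ} (hm : 0 ≤ m) (hρ : 0 ≤ ρ)
    (hrec : ∀ s, 0 ≤ s → g s ≤ m * g (ρ * s)) (n : ℕ) {s : ℝ} (hs : 0 ≤ s) :
    g s ≤ m ^ n * g (ρ ^ n * s) := by
  induction n generalizing s with
  | zero => simp
  | succ n ih =>
    calc g s ≤ m ^ n * g (ρ ^ n * s) := ih hs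
      _ ≤ m ^ n * (m * g (ρ * (ρ ^ n * s))) := by
        gcongr
        exact hrec _ (by positivity)
      _ = m ^ (n + 1) * g (ρ ^ (n + 1) * s) := by ring_nf

/-- `n = ⌈-logb ρ s⌉₊` iterations of the recursion bring `s` down to `[0, 1]` at the price of a
factor `m ^ n ≤ m * s ^ (-logb ρ m)`. -/
theorem le_mul_rpow_of_le_mul_comp {g : ℝ → ℝ} {m ρ : ℝ} (hm : 1 ≤ m) (hρ0 : 0 < ρ)
    (hρ1 : ρ < 1) (hg : MonotoneOn g (Ici 0)) (hg1 : 0 ≤ g 1)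
    (hrec : ∀ s, 0 ≤ s → g s ≤ m * g (ρ * s)) {s : ℝ} (hs : 1 ≤ s) :
    g s ≤ m * g 1 * s ^ (-logb ρ m) := by
  have hs0 : 0 < s := one_pos.trans_le hs
  set x := -logb ρ s
  have hx : 0 ≤ x := neg_nonneg.mpr ((logb_nonpos_iff_of_base_lt_one hρ0 hρ1 hs0).mpr hs)
  set n := ⌈x⌉₊
  have hρn : ρ ^ n * s ≤ 1 := by
    have : ρ ^ n ≤ s⁻¹ := by
      calc ρ ^ n = ρ ^ (n : ℝ) := (rpow_natCast ρ n).symm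
        _ ≤ ρ ^ x := rpow_le_rpow_of_exponent_ge hρ0 hρ1.le (Nat.le_ceil x)
        _ = s⁻¹ := by rw [rpow_neg hρ0.le, rpow_logb hρ0 hρ1.ne hs0]
    calc ρ ^ n * s ≤ s⁻¹ * s := by gcongr
      _ = 1 := inv_mul_cancel₀ hs0.ne'
  have hmn : m ^ n ≤ m * s ^ (-logb ρ m) := by
    calc m ^ n = m ^ (n : ℝ) := (rpow_natCast m n).symm
      _ ≤ m ^ (x + 1) := rpow_le_rpow_of_exponent_le hm (Nat.ceil_lt_add_one hx).le
      _ = m * s ^ (-logb ρ m) := by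
        rw [rpow_add_one (by positivity), rpow_neg (by positivity), rpow_neg hs0.le,
          rpow_logb_comm (by positivity) hs0, mul_comm]
  calc g s ≤ m ^ n * g (ρ ^ n * s) := le_pow_mul_of_le_mul_comp (by positivity) hρ0.le hrec n hs0.le
    _ ≤ m ^ n * g 1 := by
      gcongr
      exact hg (mem_Ici.mpr (by positivity)) (mem_Ici.mpr zero_le_one) hρn
    _ ≤ m * s ^ (-logb ρ m) * g 1 := by gcongr
    _ = m * g 1 * s ^ (-logb ρ m) := by ring

/-- Shifting by the fixed point `L / (m - 1)` of `h ↦ L + m * h` makes the recursion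
homogeneous. -/
theorem le_mul_rpow_of_le_add_mul_comp {h : ℝ → ℝ} {L m ρ : ℝ} (hm : 1 < m) (hρ0 : 0 < ρ)
    (hρ1 : ρ < 1) (hh : MonotoneOn h (Ici 0)) (hh1 : 0 ≤ h 1) (hL : 0 ≤ L)
    (hrec : ∀ s, 0 ≤ s → h s ≤ L + m * h (ρ * s)) {s : ℝ} (hs : 1 ≤ s) :
    h s ≤ m * (h 1 + L / (m - 1)) * s ^ (-logb ρ m) := by
  have hm1 : 0 < m - 1 := sub_pos.mpr hm
  have hc : 0 ≤ L / (m - 1) := div_nonneg hL hm1.le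
  have key := le_mul_rpow_of_le_mul_comp (g := fun s => h s + L / (m - 1)) hm.le hρ0 hρ1
    (fun a ha b hb hab => add_le_add_left (hh ha hb hab) _) (by positivity) ?_ hs
  · exact (le_add_of_nonneg_right hc).trans key
  · intro s hs
    have : L + L / (m - 1) = m * (L / (m - 1)) := by field_simp; ring
    calc h s + L / (m - 1) ≤ L + m * h (ρ * s) + L / (m - 1) := by gcongr; exact hrec s hs
      _ = m * (h (ρ * s) + L / (m - 1)) := by linear_combination this

theorem exists_exp_neg_rpow_le_of_mul_pow_le {g : ℝ → ℝ} {q ρ : ℝ} {m : ℕ} (hm : 1 < m)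
    (hρ0 : 0 < ρ) (hρ1 : ρ < 1) (hq0 : 0 < q) (hq1 : q ≤ 1)
    (hg0 : ∀ s, 0 ≤ s → 0 < g s) (hg1 : g 1 ≤ 1) (hg : AntitoneOn g (Ici 0))
    (hrec : ∀ s, 0 ≤ s → q * g (ρ * s) ^ m ≤ g s) :
    ∃ C > 0, ∀ s, 1 ≤ s → exp (-(C * s ^ (-logb ρ m))) ≤ g s := by
  set h : ℝ → ℝ := fun s => -log (g s)
  have hm' : (1 : ℝ) < m := by exact_mod_cast hm
  have hh : MonotoneOn h (Ici 0) := fun a ha b hb hab =>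
    neg_le_neg (log_le_log (hg0 b hb) (hg ha hb hab))
  have hh1 : 0 ≤ h 1 := neg_nonneg.mpr (log_nonpos (hg0 1 zero_le_one).le hg1)
  have hL : 0 ≤ -log q := neg_nonneg.mpr (log_nonpos hq0.le hq1)
  have hhrec : ∀ s, 0 ≤ s → h s ≤ -log q + m * h (ρ * s) := by
    intro s hs
    have hgρ := hg0 (ρ * s) (by positivity)
    have := log_le_log (by positivity) (hrec s hs)
    rw [log_mul hq0.ne' (by positivity), log_pow] at this
    simp only [h]
    linarith
  set C := m * (h 1 + -log q / (m - 1)) + 1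
  refine ⟨C, by positivity, fun s hs => ?_⟩
  have hbound := le_mul_rpow_of_le_add_mul_comp hm' hρ0 hρ1 hh hh1 hL hhrec hs
  calc exp (-(C * s ^ (-logb ρ m))) ≤ exp (-h s) := by
        gcongr
        linarith [rpow_nonneg (zero_le_one.trans hs) (-logb ρ m)]
    _ = g s := by rw [neg_neg, exp_log (hg0 s (zero_le_one.trans hs))]

section LaplaceTransform

variable {Ω ι : Type*} [MeasurableSpace Ω] [Fintype ι] {μ : Measure Ω}

theorem integrable_exp_neg_of_nonneg [IsFiniteMeasure μ] {f : Ω → ℝ} (hf : Measurable f)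
    (hf0 : ∀ᵐ ω ∂μ, 0 ≤ f ω) : Integrable (fun ω => exp (-f ω)) μ := by
  refine (integrable_const 1).mono' (by fun_prop) ?_
  filter_upwards [hf0] with ω hω
  simpa using hω

noncomputable def laplaceTransform (μ : Measure Ω) (Z : Ω → ι → ℝ) (t : ι → ℝ) : ℝ :=
  ∫ ω, exp (-(t ⬝ᵥ Z ω)) ∂μ

variable {Z : Ω → ι → ℝ}

theorem integrable_exp_neg_dotProduct [IsFiniteMeasure μ] (hZ : Measurable Z)
    (hZ0 : ∀ᵐ ω ∂μ, 0 ≤ Z ω) {t : ι → ℝ} (ht : 0 ≤ t) :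
    Integrable (fun ω => exp (-(t ⬝ᵥ Z ω))) μ :=
  integrable_exp_neg_of_nonneg (by fun_prop)
    (hZ0.mono fun _ hω => dotProduct_nonneg_of_nonneg ht hω)

theorem laplaceTransform_pos [IsProbabilityMeasure μ] (hZ : Measurable Z)
    (hZ0 : ∀ᵐ ω ∂μ, 0 ≤ Z ω) {t : ι → ℝ} (ht : 0 ≤ t) : 0 < laplaceTransform μ Z t :=
  integral_exp_pos (integrable_exp_neg_dotProduct hZ hZ0 ht)

theorem laplaceTransform_le_one [IsProbabilityMeasure μ] (hZ0 : ∀ᵐ ω ∂μ, 0 ≤ Z ω)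
    {t : ι → ℝ} (ht : 0 ≤ t) : laplaceTransform μ Z t ≤ 1 := by
  refine (integral_mono_of_nonneg ?_ (integrable_const 1) ?_).trans_eq (by simp)
  · exact ae_of_all _ fun _ => (exp_pos _).le
  · filter_upwards [hZ0] with ω hω
    simpa using dotProduct_nonneg_of_nonneg ht hω

theorem laplaceTransform_antitoneOn [IsFiniteMeasure μ] (hZ : Measurable Z)
    (hZ0 : ∀ᵐ ω ∂μ, 0 ≤ Z ω) : AntitoneOn (laplaceTransform μ Z) (Ici 0) := by
  intro s hs t ht hst
  refine integral_mono_ae (integrable_exp_neg_dotProduct hZ hZ0 ht)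
    (integrable_exp_neg_dotProduct hZ hZ0 hs) ?_
  filter_upwards [hZ0] with ω hω
  gcongr
  exact dotProduct_le_dotProduct_of_nonneg_right hst hω

theorem laplaceTransform_smul (θ : ℝ) (y : ι → ℝ) :
    laplaceTransform μ Z (θ • y) = ∫ ω, exp (-(θ * (y ⬝ᵥ Z ω))) ∂μ := by
  simp only [laplaceTransform, smul_dotProduct, smul_eq_mul]

theorem exp_neg_rpow_le_laplaceTransform [IsFiniteMeasure μ] (hZ : Measurable Z)
    (hZ0 : ∀ᵐ ω ∂μ, 0 ≤ Z ω) {C γ : ℝ}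
    (hconst : ∀ s, 1 ≤ s → exp (-(C * s ^ γ)) ≤ laplaceTransform μ Z fun _ => s)
    {t : ι → ℝ} (ht : 0 ≤ t) (ht1 : 1 ≤ ∑ j, t j) :
    exp (-(C * (∑ j, t j) ^ γ)) ≤ laplaceTransform μ Z t :=
  (hconst _ ht1).trans <| laplaceTransform_antitoneOn hZ hZ0 ht (fun _ => zero_le_one.trans ht1)
    fun j => Finset.single_le_sum (fun j _ => ht j) (Finset.mem_univ j)

end LaplaceTransform

section FixedPoint

variable {Ω ι : Type*} [MeasurableSpace Ω] [Fintype ι] {μ : Measure Ω}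

theorem vecMul_le_const_mul_sum {t : ι → ℝ} (ht : 0 ≤ t) {M : Matrix ι ι ℝ} {c : ℝ}
    (hM : ∀ i j, M i j ≤ c) : t ᵥ* M ≤ fun _ => c * ∑ i, t i := by
  intro j
  simp only [vecMul, dotProduct, Finset.mul_sum]
  exact Finset.sum_le_sum fun i _ => by
    rw [mul_comm c]
    exact mul_le_mul_of_nonneg_left (hM i j) (ht i)

theorem measureReal_mul_pow_le_of_fixedPoint [IsFiniteMeasure μ] {φ : (ι → ℝ) → ℝ}
    (hφ0 : ∀ t, 0 ≤ t → 0 < φ t) (hφ : AntitoneOn φ (Ici 0)) {N : Ω → ℕ} {A : ℕ → Ω → Matrix ι ι ℝ}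
    (hA : ∀ k ω i j, 0 ≤ A k ω i j)
    (hfe : ∀ t, 0 ≤ t → φ t = ∫ ω, ∏ k ∈ Finset.Icc 1 (N ω), φ (t ᵥ* A k ω) ∂μ)
    {E : Set Ω} (hE : MeasurableSet E) {m : ℕ} {c : ℝ} (hc : 0 ≤ c)
    (hEA : ∀ ω ∈ E, N ω = m ∧ ∀ k ∈ Finset.Icc 1 m, ∀ i j, A k ω i j ≤ c)
    {t : ι → ℝ} (ht : 0 ≤ t) :
    μ.real E * φ (fun _ => c * ∑ i, t i) ^ m ≤ φ t := by
  have hAt : ∀ k ω, 0 ≤ t ᵥ* A k ω := fun k ω j =>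
    dotProduct_nonneg_of_nonneg ht fun i => hA k ω i j
  set G := fun ω => ∏ k ∈ Finset.Icc 1 (N ω), φ (t ᵥ* A k ω)
  -- otherwise the integral in `hfe` would be the junk value `0`, while `φ t > 0`
  have hG : Integrable G μ := by
    by_contra hG
    exact (hφ0 t ht).ne' ((hfe t ht).trans (integral_undef hG))
  have hct : 0 ≤ fun _ : ι => c * ∑ i, t i := fun _ =>
    mul_nonneg hc (Finset.sum_nonneg fun i _ => ht i)
  have hEG : E.indicator (fun _ => φ (fun _ => c * ∑ i, t i) ^ m) ≤ G := by
    intro ω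
    by_cases hω : ω ∈ E
    · obtain ⟨hN, hAc⟩ := hEA ω hω
      rw [indicator_of_mem hω]
      calc φ (fun _ => c * ∑ i, t i) ^ m = ∏ _k ∈ Finset.Icc 1 m, φ (fun _ => c * ∑ i, t i) := by
            rw [Finset.prod_const, Nat.card_Icc, Nat.add_sub_cancel]
        _ ≤ ∏ k ∈ Finset.Icc 1 (N ω), φ (t ᵥ* A k ω) := by
          rw [hN]
          exact Finset.prod_le_prod (fun _ _ => (hφ0 _ hct).le) fun k hk =>
            hφ (hAt k ω) hct (vecMul_le_const_mul_sum ht (hAc k hk))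
    · rw [indicator_of_notMem hω]
      exact Finset.prod_nonneg fun k _ => (hφ0 _ (hAt k ω)).le
  calc μ.real E * φ (fun _ => c * ∑ i, t i) ^ m
      = ∫ ω, E.indicator (fun _ => φ (fun _ => c * ∑ i, t i) ^ m) ω ∂μ := by
        rw [integral_indicator_const _ hE, smul_eq_mul]
    _ ≤ ∫ ω, G ω ∂μ := integral_mono ((integrable_const _).indicator hE) hG hEG
    _ = φ t := (hfe t ht).symm

end FixedPoint

section SmallBall

variable {Ω : Type*} [MeasurableSpace Ω] {μ : Measure Ω} [IsProbabilityMeasure μ]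
  {X : Ω → ℝ}

theorem integral_exp_neg_mul_le (hX : Measurable X) (hX0 : ∀ᵐ ω ∂μ, 0 ≤ X ω) {θ : ℝ}
    (hθ : 0 ≤ θ) (x : ℝ) :
    ∫ ω, exp (-(θ * X ω)) ∂μ ≤ μ.real {ω | X ω ≤ x} + exp (-(θ * x)) := by
  have hS : MeasurableSet {ω | X ω ≤ x} := measurableSet_le hX measurable_const
  have hbound : ∀ᵐ ω ∂μ,
      exp (-(θ * X ω)) ≤ {ω | X ω ≤ x}.indicator (fun _ => (1 : ℝ)) ω + exp (-(θ * x)) := by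
    filter_upwards [hX0] with ω hω
    by_cases hωS : ω ∈ {ω | X ω ≤ x}
    · rw [indicator_of_mem hωS]
      have : exp (-(θ * X ω)) ≤ 1 := exp_le_one_iff.mpr (by nlinarith)
      linarith [exp_pos (-(θ * x))]
    · rw [indicator_of_notMem hωS, zero_add]
      gcongr
      exact (not_le.mp hωS).le
  calc ∫ ω, exp (-(θ * X ω)) ∂μ
      ≤ ∫ ω, ({ω | X ω ≤ x}.indicator (fun _ => (1 : ℝ)) ω + exp (-(θ * x))) ∂μ :=
        integral_mono_ae (integrable_exp_neg_of_nonneg (by fun_prop)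
          (hX0.mono fun ω hω => mul_nonneg hθ hω)) (((integrable_const 1).indicator hS).add
          (integrable_const _)) hbound
    _ = μ.real {ω | X ω ≤ x} + exp (-(θ * x)) := by
        rw [integral_add ((integrable_const 1).indicator hS) (integrable_const _),
          integral_indicator_const _ hS, integral_const]
        simp

theorem exists_le_mul_rpow_add_one {c γ : ℝ} (hc : 0 ≤ c) (hγ0 : 0 ≤ γ) (hγ1 : γ < 1) :
    ∃ D, 1 ≤ D ∧ c * D ^ γ + 1 ≤ D := by
  have h1γ : 0 < 1 - γ := sub_pos.mpr hγ1
  set D := max 1 ((c + 1) ^ (1 - γ)⁻¹)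
  have hD1 : 1 ≤ D := le_max_left _ _
  have hD0 : 0 < D := one_pos.trans_le hD1
  have hcD : c + 1 ≤ D ^ (1 - γ) := by
    calc c + 1 = ((c + 1) ^ (1 - γ)⁻¹) ^ (1 - γ) := by
          rw [← rpow_mul (by positivity), inv_mul_cancel₀ h1γ.ne', rpow_one]
      _ ≤ D ^ (1 - γ) := by gcongr; exact le_max_right _ _
  refine ⟨D, hD1, ?_⟩
  calc c * D ^ γ + 1 ≤ c * D ^ γ + D ^ γ := by gcongr; exact one_le_rpow hD1 hγ0
    _ = D ^ γ * (c + 1) := by ring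
    _ ≤ D ^ γ * D ^ (1 - γ) := by gcongr
    _ = D := by rw [← rpow_add hD0, add_sub_cancel, rpow_one]

/-- Choosing `θ = D x ^ (-1 / (1 - γ))` in `E[exp(-θX)] ≤ P(X ≤ x) + exp(-θx)` makes
`c θ ^ γ` and `θ x` both multiples of `x ^ (-γ / (1 - γ))`, and `D ≥ c D ^ γ + 1` makes the
second term at most half of the Laplace lower bound. -/
theorem exists_exp_neg_rpow_le_measure_le (hX : Measurable X) (hX0 : ∀ᵐ ω ∂μ, 0 ≤ X ω)
    {γ c θ₀ : ℝ} (hγ0 : 0 ≤ γ) (hγ1 : γ < 1) (hc : 0 ≤ c) (hθ₀ : 0 < θ₀)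
    (hlap : ∀ θ, θ₀ ≤ θ → exp (-(c * θ ^ γ)) ≤ ∫ ω, exp (-(θ * X ω)) ∂μ) :
    ∃ C > 0, ∃ x₀ > 0, ∀ x, 0 < x → x ≤ x₀ →
      ENNReal.ofReal (exp (-(C * x ^ (-(γ / (1 - γ)))))) ≤ μ {ω | X ω ≤ x} := by
  have h1γ : 0 < 1 - γ := sub_pos.mpr hγ1
  obtain ⟨D, hD1, hD⟩ := exists_le_mul_rpow_add_one hc hγ0 hγ1
  have hD0 : 0 < D := one_pos.trans_le hD1
  refine ⟨c * D ^ γ + 1, by positivity, min 1 ((D / θ₀) ^ (1 - γ)), by positivity, ?_⟩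
  intro x hx0 hx
  set r := x ^ (-(1 - γ)⁻¹)
  set u := x ^ (-(γ / (1 - γ)))
  have hr0 : 0 < r := by positivity
  have hu1 : 1 ≤ u := one_le_rpow_of_pos_of_le_one_of_nonpos hx0 (hx.trans (min_le_left _ _))
    (neg_nonpos.mpr (div_nonneg hγ0 h1γ.le))
  have hru : r ^ γ = u := by
    rw [← rpow_mul hx0.le]
    congr 1
    ring
  have hrx : r * x = u := by
    rw [← rpow_add_one hx0.ne']
    congr 1
    field_simp
    ring
  have hθ : θ₀ ≤ D * r := by
    have : x ^ (1 - γ)⁻¹ ≤ D / θ₀ := by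
      calc x ^ (1 - γ)⁻¹ ≤ ((D / θ₀) ^ (1 - γ)) ^ (1 - γ)⁻¹ := by
            gcongr
            exact hx.trans (min_le_right _ _)
        _ = D / θ₀ := by
            rw [← rpow_mul (by positivity), mul_inv_cancel₀ h1γ.ne', rpow_one]
    rw [show r = (x ^ (1 - γ)⁻¹)⁻¹ from rpow_neg hx0.le _, ← div_eq_mul_inv,
      le_div_iff₀ (by positivity)]
    rwa [le_div_iff₀ hθ₀, mul_comm] at this
  have hP := (hlap (D * r) hθ).trans (integral_exp_neg_mul_le hX hX0 (by positivity) x)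
  rw [mul_rpow hD0.le hr0.le, hru, ← mul_assoc, mul_assoc D, hrx] at hP
  have hhalf : exp (-u) ≤ 1 / 2 :=
    (exp_le_exp.mpr (neg_le_neg hu1)).trans exp_neg_one_lt_half.le
  have hDu : exp (-(D * u)) ≤ exp (-(c * D ^ γ * u)) * exp (-u) := by
    rw [← exp_add]
    gcongr
    nlinarith
  refine ENNReal.ofReal_le_of_le_toReal ?_
  rw [← measureReal_def]
  calc exp (-((c * D ^ γ + 1) * u)) = exp (-(c * D ^ γ * u)) * exp (-u) := by
        rw [← exp_add]
        ring_nf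
    _ ≤ exp (-(c * D ^ γ * u)) - exp (-(c * D ^ γ * u)) * exp (-u) := by
        nlinarith [exp_pos (-(c * D ^ γ * u))]
    _ ≤ μ.real {ω | X ω ≤ x} := by linarith

end SmallBall

section LaplaceSmallBall

variable {Ω ι : Type*} [MeasurableSpace Ω] [Fintype ι] {μ : Measure Ω} [IsProbabilityMeasure μ]
  {Z : Ω → ι → ℝ}

theorem exists_exp_neg_rpow_le_measure_dotProduct_le (hZ : Measurable Z)
    (hZ0 : ∀ᵐ ω ∂μ, 0 ≤ Z ω) {C γ : ℝ} (hγ0 : 0 ≤ γ) (hγ1 : γ < 1) (hC : 0 ≤ C)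
    (hlower : ∀ t, 0 ≤ t → 1 ≤ ∑ j, t j → exp (-(C * (∑ j, t j) ^ γ)) ≤ laplaceTransform μ Z t)
    {y : ι → ℝ} (hy : 0 ≤ y) (hy0 : y ≠ 0) :
    ∃ C' > 0, ∃ x₀ > 0, ∀ x, 0 < x → x ≤ x₀ →
      ENNReal.ofReal (exp (-(C' * x ^ (-(γ / (1 - γ)))))) ≤ μ {ω | y ⬝ᵥ Z ω ≤ x} := by
  have hY : 0 < ∑ j, y j := Fintype.sum_pos (lt_of_le_of_ne hy (Ne.symm hy0))
  refine exists_exp_neg_rpow_le_measure_le (by fun_prop)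
    (hZ0.mono fun ω hω => dotProduct_nonneg_of_nonneg hy hω) hγ0 hγ1
    (c := C * (∑ j, y j) ^ γ) (by positivity) (inv_pos.mpr hY) fun θ hθ => ?_
  have hθ0 : 0 < θ := (inv_pos.mpr hY).trans_le hθ
  have hθy : ∑ j, (θ • y) j = θ * ∑ j, y j := by simp [Finset.mul_sum]
  rw [← laplaceTransform_smul]
  convert hlower (θ • y) (smul_nonneg hθ0.le hy)
    (by rwa [hθy, ← inv_le_iff_one_le_mul₀ hY]) using 3
  rw [hθy, mul_rpow hθ0.le hY.le]
  ring

end LaplaceSmallBall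

theorem exponential_decay_lower_general
    {Ω : Type*} [MeasurableSpace Ω] (μ : Measure Ω) [IsProbabilityMeasure μ]
    {p : ℕ} (hp : 0 < p)
    (N : Ω → ℕ) (hNmeas : Measurable N)
    (A : ℕ → Ω → Fin p → Fin p → ℝ) (hApos : ∀ k ω i j, 0 ≤ A k ω i j)
    (hAmeas : ∀ k, Measurable (A k))
    (Z : Ω → Fin p → ℝ) (hZmeas : Measurable Z)
    (hZpos : ∀ᵐ ω ∂μ, ∀ j, 0 < Z ω j)
    (φ : (Fin p → ℝ) → ℝ)
    (hφ : ∀ t : Fin p → ℝ, φ t = ∫ ω, Real.exp (-(∑ j, t j * Z ω j)) ∂μ)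
    (hfe : ∀ t : Fin p → ℝ, (∀ j, 0 ≤ t j) →
      φ t = ∫ ω, ∏ k ∈ Finset.Icc 1 (N ω), φ (fun j => ∑ i, t i * A k ω i j) ∂μ)
    (m : ℕ) (hm : 2 ≤ m)
    (a ε : ℝ) (ha : 0 < a) (hε : 0 < ε)
    (hap : (a + ε) * p < 1) (hapm : (a + ε) * p * m < 1)
    (hevent : 0 < μ {ω | N ω = m ∧ ∀ k, 1 ≤ k → k ≤ m → ∀ i j, A k ω i j ≤ a + ε}) :
    (∃ C₂ > 0, ∃ T > 0, ∀ t : Fin p → ℝ, (∀ j, 0 ≤ t j) → T ≤ ∑ j, t j →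
      Real.exp (-(C₂ * (∑ j, t j) ^ (-Real.log m / Real.log ((a + ε) * p)))) ≤ φ t) ∧
    (∀ y : Fin p → ℝ, (∀ j, 0 ≤ y j) → y ≠ 0 →
      ∃ C > 0, ∃ x₀ > 0, ∀ x : ℝ, 0 < x → x ≤ x₀ →
        ENNReal.ofReal (Real.exp (-(C *
          x ^ (-((-Real.log m / Real.log ((a + ε) * p)) /
            (1 - (-Real.log m / Real.log ((a + ε) * p))))))))
          ≤ μ {ω | ∑ j, y j * Z ω j ≤ x}) := by
  obtain rfl : φ = laplaceTransform μ Z := funext hφ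
  have hZ0 : ∀ᵐ ω ∂μ, 0 ≤ Z ω := hZpos.mono fun ω hω j => (hω j).le
  have hφ0 : ∀ t, 0 ≤ t → 0 < laplaceTransform μ Z t := fun _ => laplaceTransform_pos hZmeas hZ0
  have hφanti := laplaceTransform_antitoneOn hZmeas hZ0
  set ρ := (a + ε) * p
  have hρ0 : 0 < ρ := by positivity
  have hm1 : 1 < m := by omega
  rw [neg_div, ← logb]
  have hγ0 : 0 ≤ -logb ρ m := neg_nonneg.mpr <|
    (logb_nonpos_iff_of_base_lt_one hρ0 hap (by positivity)).mpr (by exact_mod_cast hm1.le)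
  have hγ1 : -logb ρ m < 1 := neg_logb_lt_one hρ0 hap (by positivity) hapm
  set E := {ω | N ω = m ∧ ∀ k, 1 ≤ k → k ≤ m → ∀ i j, A k ω i j ≤ a + ε}
  have hE : MeasurableSet E := by measurability
  have hstep : ∀ s, 0 ≤ s →
      μ.real E * laplaceTransform μ Z (fun _ => ρ * s) ^ m ≤ laplaceTransform μ Z fun _ => s := by
    intro s hs
    have hsum : (a + ε) * ∑ _ : Fin p, s = ρ * s := by simp [ρ]; ring
    simpa only [hsum] using measureReal_mul_pow_le_of_fixedPoint hφ0 hφanti hApos hfe hE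
      (by positivity) (fun _ ⟨hN, hA⟩ => ⟨hN, fun k hk => hA k (Finset.mem_Icc.mp hk).1
        (Finset.mem_Icc.mp hk).2⟩) (fun _ => hs)
  obtain ⟨C₂, hC₂, hdecay⟩ := exists_exp_neg_rpow_le_of_mul_pow_le hm1 hρ0 hap
    (ENNReal.toReal_pos hevent.ne' (measure_ne_top μ E)) measureReal_le_one
    (fun _ hs => hφ0 _ fun _ => hs) (laplaceTransform_le_one hZ0 fun _ => zero_le_one)
    (fun s hs t ht hst => hφanti (fun _ => hs) (fun _ => ht) fun _ => hst) hstep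
  have hlower t (ht : 0 ≤ t) := exp_neg_rpow_le_laplaceTransform hZmeas hZ0 hdecay ht
  exact ⟨⟨C₂, hC₂, 1, one_pos, hlower⟩, fun y hy hy0 =>
    exists_exp_neg_rpow_le_measure_dotProduct_le hZmeas hZ0 hγ0 hγ1 hC₂.le hlower hy hy0⟩

/-- **Theorem 2.4(b) (the exponential case, lower bound).** Suppose `N ≥ m̲ ≥ 2` a.s. and
`a̲ > 0`, `ε > 0` satisfy `(a̲+ε) p < 1` and `(a̲+ε) p m̲ < 1`, and
`P(N = m̲ and max_{ij}(A_k)_{ij} ≤ a̲+ε for all 1 ≤ k ≤ m̲) > 0`.  Then, with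
`γ(ε) = -log m̲ / log((a̲+ε)p) ∈ (0,1)`, there is `C₂ > 0` with
`φ(t) ≥ exp(-C₂ ‖t‖^{γ(ε)})` for `‖t‖` large, and for every fixed nonzero `y ∈ [0,∞)^p`
there is `C_{2,y} > 0` with `P(y·Z ≤ x) ≥ exp(-C_{2,y} x^{-γ(ε)/(1-γ(ε))})` for small `x > 0`. -/
theorem exponential_decay_lower
    {Ω : Type*} [MeasurableSpace Ω] (μ : Measure Ω) [IsProbabilityMeasure μ]
    {p : ℕ} (hp : 0 < p)
    (N : Ω → ℕ) (hN : ∀ ω, 1 ≤ N ω) (hNmeas : Measurable N)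
    (A : ℕ → Ω → Fin p → Fin p → ℝ) (hApos : ∀ k ω i j, 0 ≤ A k ω i j)
    (hAmeas : ∀ k, Measurable (A k))
    (Z : Ω → Fin p → ℝ) (hZmeas : Measurable Z)
    (hZpos : ∀ᵐ ω ∂μ, ∀ j, 0 < Z ω j)
    (φ : (Fin p → ℝ) → ℝ)
    (hφ : ∀ t : Fin p → ℝ, φ t = ∫ ω, Real.exp (-(∑ j, t j * Z ω j)) ∂μ)
    (hfe : ∀ t : Fin p → ℝ, (∀ j, 0 ≤ t j) →
      φ t = ∫ ω, ∏ k ∈ Finset.Icc 1 (N ω), φ (fun j => ∑ i, t i * A k ω i j) ∂μ)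
    (m : ℕ) (hm : 2 ≤ m) (hNm : ∀ᵐ ω ∂μ, m ≤ N ω)
    (a ε : ℝ) (ha : 0 < a) (hε : 0 < ε)
    (hap : (a + ε) * p < 1) (hapm : (a + ε) * p * m < 1)
    (hevent : 0 < μ {ω | N ω = m ∧ ∀ k, 1 ≤ k → k ≤ m → ∀ i j, A k ω i j ≤ a + ε}) :
    (∃ C₂ > 0, ∃ T > 0, ∀ t : Fin p → ℝ, (∀ j, 0 ≤ t j) → T ≤ ∑ j, t j →
      Real.exp (-(C₂ * (∑ j, t j) ^ (-Real.log m / Real.log ((a + ε) * p)))) ≤ φ t) ∧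
    (∀ y : Fin p → ℝ, (∀ j, 0 ≤ y j) → y ≠ 0 →
      ∃ C > 0, ∃ x₀ > 0, ∀ x : ℝ, 0 < x → x ≤ x₀ →
        ENNReal.ofReal (Real.exp (-(C *
          x ^ (-((-Real.log m / Real.log ((a + ε) * p)) /
            (1 - (-Real.log m / Real.log ((a + ε) * p))))))))
          ≤ μ {ω | ∑ j, y j * Z ω j ≤ x}) :=
  exponential_decay_lower_general μ hp N hNmeas A hApos hAmeas Z hZmeas hZpos φ hφ hfe m hm a ε ha
    hε hap hapm hevent
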